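/- Let A be an infinite-dimensional affine k-algebra that is an Ore domain but not a division ring, with GK(A) = 2. Then every irreducible left A-module M that is infinite-dimensional over k satisfies GK(M) = 1. -/

import Mathlib

open Filter Pointwise

/-- `γ(f) = limsup_{n→∞} log f(n) / log n`, as an extended real number. -/
noncomputable def gammaGrowth (f : ℕ → ℝ) : EReal :=
  Filter.atTop.limsup fun n : ℕ => ((Real.log (f n) / Real.log n : ℝ) : EReal)

/-- A frame of an affine `k`-algebra `A`: a finite-dimensional subspace containing `1`
which generates `A` as a `k`-algebra. -/
def IsFrame (k : Type*) {A : Type*} [Field k] [Ring A] [Algebra k A]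
    (V : Submodule k A) : Prop :=
  FiniteDimensional k ↥V ∧ (1 : A) ∈ V ∧ (⨆ n : ℕ, V ^ n) = ⊤

/-- The Gelfand–Kirillov dimension of `A` computed from the frame `V`:
`limsup_{n→∞} log (dim_k Vⁿ) / log n`. -/
noncomputable def algGK (k : Type*) {A : Type*} [Field k] [Ring A] [Algebra k A]
    (V : Submodule k A) : EReal :=
  gammaGrowth fun n => (Module.finrank k ↥(V ^ n) : ℝ)

universe u v

variable {k : Type u} {A : Type v} [Field k] [Ring A] [Algebra k A]

/-- The Gelfand–Kirillov dimension of an `A`-module `M` computed from the frame `V`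
and a finite-dimensional generating subspace `F`. -/
noncomputable def modGKWith (V : Submodule k A) {M : Type*} [AddCommGroup M]
    [Module A M] [Module k M] [IsScalarTower k A M] (F : Submodule k M) : EReal :=
  gammaGrowth fun n =>
    (Module.finrank k
      ↥(Submodule.span k (((V ^ n : Submodule k A) : Set A) • (F : Set M))) : ℝ)

/-- The Gelfand–Kirillov dimension of a finitely generated `A`-module `M`
(relative to the frame `V` of `A`): it is independent of the choice of
finite-dimensional generating subspace `F`, so we take the infimum over all of them. -/
noncomputable def modGK (V : Submodule k A) (M : Type*) [AddCommGroup M]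
    [Module A M] [Module k M] [IsScalarTower k A M] : EReal :=
  sInf { d : EReal | ∃ F : Submodule k M, FiniteDimensional k ↥F ∧
    Submodule.span A (F : Set M) = ⊤ ∧ d = modGKWith V F }

/-! ### Auxiliary material -/

section Aux

variable {M : Type*} [AddCommGroup M] [Module A M] [Module k M] [IsScalarTower k A M]

/-- Abbreviation for the spaces appearing in `modGKWith`. -/
noncomputable def spanSMul (p : Submodule k A) (F : Submodule k M) : Submodule k M :=
  Submodule.span k ((p : Set A) • (F : Set M))

theorem smul_mem_spanSMul {p : Submodule k A} {F : Submodule k M} {x : A} {y : M}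
    (hx : x ∈ p) (hy : y ∈ F) : x • y ∈ spanSMul p F :=
  Submodule.subset_span (Set.smul_mem_smul hx hy)

theorem spanSMul_mono {p p' : Submodule k A} {F F' : Submodule k M} (h1 : p ≤ p')
    (h2 : F ≤ F') : spanSMul p F ≤ spanSMul p' F' :=
  Submodule.span_mono (Set.smul_subset_smul h1 h2)

theorem spanSMul_span_eq (s : Set A) (t : Set M) :
    spanSMul (Submodule.span k s) (Submodule.span k t) = Submodule.span k (s • t) := by
  apply le_antisymm
  · rw [spanSMul, Submodule.span_le]
    rintro z ⟨x, hx, y, hy, rfl⟩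
    revert y
    have hbase : ∀ x ∈ s, ∀ y ∈ Submodule.span k t, x • y ∈ Submodule.span k (s • t) := by
      intro x hx y hy
      induction hy using Submodule.span_induction with
      | mem y hyt => exact Submodule.subset_span (Set.smul_mem_smul hx hyt)
      | zero => simp
      | add y z _ _ hy hz =>
          have : x • (y + z) = x • y + x • z := smul_add x y z
          rw [this]; exact Submodule.add_mem _ hy hz
      | smul c y _ hy =>
          have : x • (c • y) = c • (x • y) := smul_comm c x y |>.symm
          rw [this]; exact Submodule.smul_mem _ _ hy
    induction hx using Submodule.span_induction with
    | mem x hxs => exact fun y hy => hbase x hxs y hy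
    | zero => intro y hy; simp
    | add x z _ _ hx hz =>
        intro y hy
        show (x + z) • y ∈ (Submodule.span k (s • t) : Set M)
        have : (x + z) • y = x • y + z • y := add_smul x z y
        rw [this]; exact Submodule.add_mem _ (hx y hy) (hz y hy)
    | smul c x _ hx =>
        intro y hy
        show (c • x) • y ∈ (Submodule.span k (s • t) : Set M)
        have : (c • x) • y = c • (x • y) := smul_assoc c x y
        rw [this]; exact Submodule.smul_mem _ _ (hx y hy)
  · exact Submodule.span_mono (Set.smul_subset_smul Submodule.subset_span Submodule.subset_span)

theorem spanSMul_fg {p : Submodule k A} {F : Submodule k M} (hp : p.FG) (hF : F.FG) :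
    (spanSMul p F).FG := by
  obtain ⟨s, hs⟩ := hp
  obtain ⟨t, ht⟩ := hF
  have : spanSMul p F = Submodule.span k ((s : Set A) • (t : Set M)) := by
    rw [← hs, ← ht, spanSMul_span_eq]
  rw [this, Submodule.fg_def]
  exact ⟨_, (s.finite_toSet.smul t.finite_toSet), rfl⟩

theorem spanSMul_finiteDimensional {p : Submodule k A} {F : Submodule k M}
    [FiniteDimensional k ↥p] [FiniteDimensional k ↥F] :
    FiniteDimensional k ↥(spanSMul p F) :=
  (Submodule.fg_iff_finiteDimensional _).mp <|
    spanSMul_fg ((Submodule.fg_iff_finiteDimensional p).mpr ‹_›)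
      ((Submodule.fg_iff_finiteDimensional F).mpr ‹_›)

theorem spanSMul_mul (p q : Submodule k A) (F : Submodule k M) :
    spanSMul (p * q) F = spanSMul p (spanSMul q F) := by
  apply le_antisymm
  · rw [spanSMul, Submodule.span_le]
    rintro z ⟨w, hw, f, hf, rfl⟩
    show w • f ∈ spanSMul p (spanSMul q F)
    refine Submodule.mul_induction_on hw (fun x hx y hy => ?_) (fun x y hx hy => ?_)
    · rw [mul_smul]
      exact smul_mem_spanSMul hx (smul_mem_spanSMul hy hf)
    · rw [add_smul]; exact Submodule.add_mem _ hx hy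
  · rw [spanSMul, Submodule.span_le]
    rintro z ⟨x, hx, w, hw, rfl⟩
    show x • w ∈ spanSMul (p * q) F
    induction hw using Submodule.span_induction with
    | mem w hwm =>
        obtain ⟨y, hy, f, hf, rfl⟩ := hwm
        rw [← mul_smul]
        exact smul_mem_spanSMul (Submodule.mul_mem_mul hx hy) hf
    | zero => simp
    | add w w' _ _ hw hw' =>
        have : x • (w + w') = x • w + x • w' := smul_add x w w'
        rw [this]; exact Submodule.add_mem _ hw hw'
    | smul c w _ hw =>
        have : x • (c • w) = c • (x • w) := smul_comm c x w |>.symm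
        rw [this]; exact Submodule.smul_mem _ _ hw

theorem pow_le_pow_of_le {V : Submodule k A} (h1 : (1 : A) ∈ V) {a b : ℕ} (hab : a ≤ b) :
    V ^ a ≤ V ^ b := by
  induction b with
  | zero => simpa [Nat.le_zero.mp hab] using le_rfl
  | succ b ih =>
      rcases Nat.lt_or_ge a (b + 1) with h | h
      · refine le_trans (ih (Nat.lt_succ_iff.mp h)) ?_
        intro x hx
        have : x * 1 ∈ V ^ b * V := Submodule.mul_mem_mul hx h1
        rwa [mul_one, ← pow_succ] at this
      · have : a = b + 1 := le_antisymm hab h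
        subst this; exact le_rfl

theorem one_mem_pow {V : Submodule k A} (h1 : (1 : A) ∈ V) (n : ℕ) : (1 : A) ∈ V ^ n := by
  have : (1 : A) ∈ V ^ 0 := by rw [pow_zero]; exact Submodule.one_le.mp le_rfl
  exact pow_le_pow_of_le h1 (Nat.zero_le n) this

theorem exists_mem_pow {V : Submodule k A} (h1 : (1 : A) ∈ V) (htop : (⨆ n : ℕ, V ^ n) = ⊤)
    (x : A) : ∃ n, x ∈ V ^ n := by
  have hx : x ∈ ⨆ n : ℕ, V ^ n := htop.symm ▸ Submodule.mem_top
  have hdir : Directed (· ≤ ·) (fun n : ℕ => V ^ n) := by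
    intro a b
    exact ⟨max a b, pow_le_pow_of_le h1 (le_max_left _ _),
      pow_le_pow_of_le h1 (le_max_right _ _)⟩
  exact (Submodule.mem_iSup_of_directed _ hdir).mp hx

end Aux


section Aux2

variable {M : Type*} [AddCommGroup M] [Module A M] [Module k M] [IsScalarTower k A M]

/-- Core lemma: left multiples of powers of `a` with coefficients in a subspace
meeting `Aa` trivially are linearly independent. -/
theorem core_vanish [NoZeroDivisors A] (a : A) (ha : a ≠ 0) (P : Submodule k A)
    (hP : ∀ x ∈ P, (∃ y : A, y * a = x) → x = 0) :
    ∀ (q : ℕ) (w : Fin q → A), (∀ i, w i ∈ P) →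
      (∑ i : Fin q, w i * a ^ (i : ℕ)) = 0 → ∀ i, w i = 0 := by
  intro q
  induction q with
  | zero => exact fun w _ _ i => i.elim0
  | succ q ih =>
      intro w hw hsum
      rw [Fin.sum_univ_succ] at hsum
      have hrw : ∀ i : Fin q, w i.succ * a ^ ((i.succ : ℕ)) = (w i.succ * a ^ (i : ℕ)) * a := by
        intro i
        rw [Fin.val_succ, pow_succ, mul_assoc]
      rw [Finset.sum_congr rfl (fun i _ => hrw i), ← Finset.sum_mul] at hsum
      set S := ∑ i : Fin q, w i.succ * a ^ (i : ℕ) with hS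
      have hw0 : w 0 = 0 := by
        apply hP _ (hw 0)
        refine ⟨-S, ?_⟩
        have h0 : w 0 * a ^ ((0 : Fin (q+1)) : ℕ) = w 0 := by simp
        rw [h0] at hsum
        rw [neg_mul]
        have := eq_neg_of_add_eq_zero_left hsum
        rw [this]
      have hSa : S * a = 0 := by
        have : w 0 * a ^ ((0 : Fin (q+1)) : ℕ) = 0 := by rw [hw0]; simp
        rw [this, zero_add] at hsum
        exact hsum
      have hS0 : S = 0 := by
        rcases mul_eq_zero.mp hSa with h | h
        · exact h
        · exact absurd h ha
      have htail := ih (fun i => w i.succ) (fun i => hw i.succ) hS0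
      intro i
      refine Fin.cases ?_ ?_ i
      · exact hw0
      · exact fun j => htail j

end Aux2

section Aux3

variable {M : Type*} [AddCommGroup M] [Module A M] [Module k M] [IsScalarTower k A M]

variable (m : M)

/-- The `k`-linear map `x ↦ x • m`. -/
noncomputable def smulMap : A →ₗ[k] M :=
  (LinearMap.toSpanSingleton A M m).restrictScalars k

@[simp] theorem smulMap_apply (x : A) : smulMap (k := k) (M := M) m x = x • m := rfl

theorem span_smul_singleton_eq (p : Submodule k A) :
    Submodule.span k ((p : Set A) • ({m} : Set M)) = Submodule.map (smulMap m) p := by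
  rw [Set.smul_singleton]
  have : (fun x : A => x • m) = ⇑(smulMap (k := k) (M := M) m) := rfl
  rw [this, Submodule.span_image, Submodule.span_eq]

/-- The key counting estimate:
`q * dim (Vᑫ • m) ≤ dim V^((r+1)q)` when `a • m = 0`, `a ≠ 0`, `a ∈ Vʳ`. -/
theorem count_lemma [NoZeroDivisors A] (V : Submodule k A) (h1 : (1 : A) ∈ V)
    [hVfd : FiniteDimensional k ↥V]
    (a : A) (ha : a ≠ 0) (r : ℕ) (har : a ∈ V ^ r)
    (hma : a • m = 0) (q : ℕ) :
    q * Module.finrank k ↥(Submodule.span k (((V ^ q : Submodule k A) : Set A) • ({m} : Set M)))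
      ≤ Module.finrank k ↥(V ^ ((r + 1) * q)) := by
  classical
  have hfg : V.FG := (Submodule.fg_iff_finiteDimensional V).mpr hVfd
  haveI fd1 : FiniteDimensional k ↥(V ^ q) :=
    (Submodule.fg_iff_finiteDimensional _).mp (hfg.pow q)
  haveI fd2 : FiniteDimensional k ↥(V ^ ((r + 1) * q)) :=
    (Submodule.fg_iff_finiteDimensional _).mp (hfg.pow _)
  set ψ : ↥(V ^ q) →ₗ[k] M := (smulMap m).comp (V ^ q).subtype with hψ
  have hrange : LinearMap.range ψ = Submodule.map (smulMap m) (V ^ q) := by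
    rw [hψ, LinearMap.range_comp, Submodule.range_subtype]
  -- complement of the kernel
  obtain ⟨U, hU⟩ := Submodule.exists_isCompl (LinearMap.ker ψ)
  have hUrank : Module.finrank k ↥U = Module.finrank k ↥(LinearMap.range ψ) := by
    have h1' := LinearMap.finrank_range_add_finrank_ker ψ
    have h2' := Submodule.finrank_add_eq_of_isCompl hU
    omega
  -- the linear map (Fin q → U) → A , u ↦ ∑ uᵢ aⁱ
  set toA : (Fin q → ↥U) →ₗ[k] A :=
    { toFun := fun u => ∑ i : Fin q, (((u i : ↥(V ^ q)) : A) * a ^ (i : ℕ))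
      map_add' := by
        intro u v
        simp only [Pi.add_apply, Submodule.coe_add, add_mul]
        rw [Finset.sum_add_distrib]
      map_smul' := by
        intro c u
        simp only [Pi.smul_apply, SetLike.val_smul, smul_mul_assoc, RingHom.id_apply]
        rw [Finset.smul_sum] } with htoA
  have hmem : ∀ u : Fin q → ↥U, toA u ∈ V ^ ((r + 1) * q) := by
    intro u
    have heq : (r + 1) * q = q + r * q := by ring
    rw [heq]
    show (∑ i : Fin q, (((u i : ↥(V ^ q)) : A) * a ^ (i : ℕ))) ∈ V ^ (q + r * q)
    refine Submodule.sum_mem _ fun i _ => ?_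
    rw [pow_add]
    refine Submodule.mul_mem_mul (((u i : ↥(V ^ q))).2) ?_
    have h1'' : a ^ (i : ℕ) ∈ (V ^ r) ^ (i : ℕ) := Submodule.pow_mem_pow _ har _
    rw [← pow_mul] at h1''
    exact pow_le_pow_of_le h1 (Nat.mul_le_mul_left r (le_of_lt i.isLt)) h1''
  set Φ : (Fin q → ↥U) →ₗ[k] ↥(V ^ ((r + 1) * q)) := toA.codRestrict _ hmem with hΦ
  have hinj : Function.Injective Φ := by
    rw [injective_iff_map_eq_zero]
    intro u hu
    have htoA0 : toA u = 0 := congrArg Subtype.val hu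
    have hvanish := core_vanish a ha (U.map (V ^ q).subtype) ?_ q
      (fun i => ((u i : ↥(V ^ q)) : A)) (fun i => ⟨u i, (u i).2, rfl⟩) htoA0
    · funext i
      have := hvanish i
      ext
      exact congrArg Subtype.val (Subtype.ext this : (u i : ↥(V ^ q)) = ⟨0, by simp⟩) ▸ rfl
    · rintro x ⟨u', hu', rfl⟩ ⟨y, hy⟩
      have hker : u' ∈ LinearMap.ker ψ := by
        rw [LinearMap.mem_ker, hψ]
        show smulMap (k := k) (M := M) m ((u' : A)) = 0
        have hy' : y * a = (u' : A) := hy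
        rw [smulMap_apply, ← hy', mul_smul, hma, smul_zero]
      have : u' ∈ LinearMap.ker ψ ⊓ U := ⟨hker, hu'⟩
      rw [hU.inf_eq_bot] at this
      rw [this]
      rfl
  have hle : Module.finrank k (Fin q → ↥U) ≤ Module.finrank k ↥(V ^ ((r + 1) * q)) :=
    LinearMap.finrank_le_finrank_of_injective hinj
  have hpi : Module.finrank k (Fin q → ↥U) = q * Module.finrank k ↥U := by
    rw [Module.finrank_pi_fintype, Finset.sum_const, Finset.card_univ, Fintype.card_fin,
      smul_eq_mul]
  rw [span_smul_singleton_eq, ← hrange, ← hUrank]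
  rw [hpi] at hle
  exact hle

end Aux3

section Aux4

variable {M : Type*} [AddCommGroup M] [Module A M] [Module k M] [IsScalarTower k A M]

theorem spanSMul_stable_top (V : Submodule k A) (h1 : (1 : A) ∈ V)
    (htop : (⨆ n : ℕ, V ^ n) = ⊤) (F : Submodule k M) (hFtop : Submodule.span A (F : Set M) = ⊤)
    (n : ℕ) (hstab : spanSMul (V ^ (n + 1)) F ≤ spanSMul (V ^ n) F) :
    spanSMul (V ^ n) F = (⊤ : Submodule k M) := by
  set W := spanSMul (V ^ n) F with hW
  have hVW : ∀ x ∈ V, ∀ w ∈ W, x • w ∈ W := by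
    intro x hx w hw
    have : x • w ∈ spanSMul V W := smul_mem_spanSMul hx hw
    have heq : spanSMul V W = spanSMul (V ^ (n + 1)) F := by
      rw [hW, ← spanSMul_mul, ← pow_succ']
    rw [heq] at this
    exact hstab this
  have hPW : ∀ p : ℕ, ∀ x ∈ V ^ p, ∀ w ∈ W, x • w ∈ W := by
    intro p
    induction p with
    | zero =>
        intro x hx w hw
        rw [pow_zero] at hx
        obtain ⟨c, rfl⟩ := Submodule.mem_one.mp hx
        rw [algebraMap_smul]
        exact Submodule.smul_mem _ _ hw
    | succ p ih =>
        intro x hx w hw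
        rw [pow_succ'] at hx
        refine Submodule.mul_induction_on hx (fun v hv y hy => ?_) (fun y z hy hz => ?_)
        · rw [mul_smul]
          exact hVW v hv _ (ih y hy w hw)
        · rw [add_smul]
          exact Submodule.add_mem _ hy hz
  -- W is an A-submodule
  let N : Submodule A M :=
    { carrier := (W : Set M)
      add_mem' := fun ha hb => W.add_mem ha hb
      zero_mem' := W.zero_mem
      smul_mem' := by
        intro c w hw
        obtain ⟨p, hp⟩ := exists_mem_pow h1 htop c
        exact hPW p c hp w hw }
  have hFN : (F : Set M) ⊆ (N : Set M) := by
    intro f hf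
    have : (1 : A) • f ∈ W := smul_mem_spanSMul (one_mem_pow h1 n) hf
    rwa [one_smul] at this
  have hNtop : N = ⊤ := by
    have h2 : (⊤ : Submodule A M) ≤ N := hFtop ▸ Submodule.span_le.mpr hFN
    exact le_antisymm le_top h2
  rw [Submodule.eq_top_iff']
  intro x
  have : x ∈ N := hNtop ▸ Submodule.mem_top
  exact this

theorem finrank_spanSMul_lower (V : Submodule k A) (h1 : (1 : A) ∈ V)
    (htop : (⨆ n : ℕ, V ^ n) = ⊤) [hVfd : FiniteDimensional k ↥V]
    (F : Submodule k M) [hFfd : FiniteDimensional k ↥F]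
    (hFtop : Submodule.span A (F : Set M) = ⊤)
    (hMnt : Nontrivial M) (hMinf : ¬ FiniteDimensional k M) (n : ℕ) :
    n + 1 ≤ Module.finrank k ↥(spanSMul (V ^ n) F) := by
  have hfg : V.FG := (Submodule.fg_iff_finiteDimensional V).mpr hVfd
  have hfd : ∀ p : ℕ, FiniteDimensional k ↥(spanSMul (V ^ p) F) := fun p => by
    haveI : FiniteDimensional k ↥(V ^ p) := (Submodule.fg_iff_finiteDimensional _).mp (hfg.pow p)
    exact spanSMul_finiteDimensional
  induction n with
  | zero =>
      haveI := hfd 0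
      have hFne : F ≠ ⊥ := by
        intro hbot
        rw [hbot, Submodule.bot_coe, Submodule.span_zero_singleton] at hFtop
        exact bot_ne_top hFtop
      have hWne : spanSMul (V ^ 0) F ≠ ⊥ := by
        intro hbot
        apply hFne
        rw [eq_bot_iff]
        intro f hf
        have : (1 : A) • f ∈ spanSMul (V ^ 0) F := smul_mem_spanSMul (one_mem_pow h1 0) hf
        rw [one_smul] at this
        rw [hbot] at this
        exact this
      haveI : Nontrivial ↥(spanSMul (V ^ 0) F) :=
        Submodule.nontrivial_iff_ne_bot.mpr hWne
      have := Module.finrank_pos (R := k) (M := ↥(spanSMul (V ^ 0) F))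
      omega
  | succ n ih =>
      haveI := hfd n
      haveI := hfd (n + 1)
      have hlt : spanSMul (V ^ n) F < spanSMul (V ^ (n + 1)) F := by
        rcases lt_or_eq_of_le (spanSMul_mono (pow_le_pow_of_le h1 (Nat.le_succ n)) le_rfl :
          spanSMul (V ^ n) F ≤ spanSMul (V ^ (n + 1)) F) with h | h
        · exact h
        · exfalso
          apply hMinf
          have := spanSMul_stable_top V h1 htop F hFtop n (le_of_eq h.symm)
          have : FiniteDimensional k ↥(⊤ : Submodule k M) := this ▸ hfd n
          exact Module.Finite.equiv (Submodule.topEquiv (R := k) (M := M))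
      have := Submodule.finrank_lt_finrank_of_lt hlt
      omega

end Aux4

section Analysis

theorem ereal_le_of_forall_eps {a : EReal} {b : ℝ}
    (h : ∀ ε : ℝ, 0 < ε → a ≤ ((b + ε : ℝ) : EReal)) : a ≤ (b : EReal) := by
  by_contra hc
  push_neg at hc
  obtain ⟨y, h1, h2⟩ := EReal.exists_between_coe_real hc
  have hby : b < y := by exact_mod_cast h1
  have h3 := h (y - b) (sub_pos.mpr hby)
  rw [show b + (y - b) = y by ring] at h3
  exact absurd h2 (not_lt.mpr h3)

theorem one_le_gammaGrowth {f : ℕ → ℝ} (h : ∀ᶠ n : ℕ in atTop, (n : ℝ) ≤ f n) :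
    (1 : EReal) ≤ gammaGrowth f := by
  rw [gammaGrowth]
  refine le_limsup_of_le (by isBoundedDefault) fun b hb => ?_
  obtain ⟨n, ⟨hn1, hn2⟩, hn3⟩ := ((h.and (eventually_ge_atTop 2)).and hb).exists
  refine le_trans ?_ hn3
  have hn2' : (2 : ℝ) ≤ (n : ℝ) := by exact_mod_cast hn2
  have hlogn : 0 < Real.log n := Real.log_pos (by linarith)
  have hlogf : Real.log (n : ℝ) ≤ Real.log (f n) := Real.log_le_log (by linarith) hn1
  have : (1 : ℝ) ≤ Real.log (f n) / Real.log n := by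
    rw [le_div_iff₀ hlogn]; linarith
  exact_mod_cast this

theorem gammaGrowth_le_one {f : ℕ → ℝ}
    (h : ∀ ε : ℝ, 0 < ε → ∀ᶠ n : ℕ in atTop, Real.log (f n) ≤ (1 + ε) * Real.log n) :
    gammaGrowth f ≤ (1 : EReal) := by
  have hmain : ∀ ε : ℝ, 0 < ε → gammaGrowth f ≤ ((1 + ε : ℝ) : EReal) := by
    intro ε hε
    rw [gammaGrowth]
    refine limsup_le_of_le (by isBoundedDefault) ?_
    filter_upwards [h ε hε, eventually_ge_atTop 2] with n hn h2
    have h2' : (2 : ℝ) ≤ (n : ℝ) := by exact_mod_cast h2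
    have hlogn : 0 < Real.log n := Real.log_pos (by linarith)
    have : Real.log (f n) / Real.log n ≤ 1 + ε := by
      rw [div_le_iff₀ hlogn]; exact hn
    exact_mod_cast this
  have := ereal_le_of_forall_eps (b := 1) hmain
  exact_mod_cast this

theorem extract_growth {g : ℕ → ℝ} (hg : gammaGrowth g = 2) :
    ∀ ε : ℝ, 0 < ε → ∀ᶠ n : ℕ in atTop, Real.log (g n) ≤ (2 + ε) * Real.log n := by
  intro ε hε
  have hlt : gammaGrowth g < ((2 + ε : ℝ) : EReal) := by
    rw [hg]
    have h2 : ((2 : ℝ) : EReal) < ((2 + ε : ℝ) : EReal) := EReal.coe_lt_coe_iff.mpr (by linarith)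
    have e2 : ((2 : ℝ) : EReal) = 2 := by norm_cast
    rw [e2] at h2
    exact h2
  rw [gammaGrowth] at hlt
  have hev := eventually_lt_of_limsup_lt hlt (by isBoundedDefault)
  filter_upwards [hev, eventually_ge_atTop 2] with n h1 h2
  have h2' : (2 : ℝ) ≤ (n : ℝ) := by exact_mod_cast h2
  have hlogn : 0 < Real.log n := Real.log_pos (by linarith)
  have h1' : Real.log (g n) / Real.log n < 2 + ε := by exact_mod_cast h1
  have := (div_lt_iff₀ hlogn).mp h1'
  linarith

end Analysis

set_option maxHeartbeats 1000000 in
/-- Let `A` be an infinite-dimensional affine `k`-algebra that is an Ore domain but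
not a division ring, with `GK(A) = 2`.  Then every irreducible left `A`-module `M`
that is infinite-dimensional over `k` satisfies `GK(M) = 1`. -/
theorem stmt_8 [Nontrivial A] [NoZeroDivisors A]
    (hOre : ∀ a b : A, a ≠ 0 → b ≠ 0 →
      (∃ x : A, x ≠ 0 ∧ (∃ r : A, r * a = x) ∧ (∃ s : A, s * b = x)) ∧
      (∃ y : A, y ≠ 0 ∧ (∃ r : A, a * r = y) ∧ (∃ s : A, b * s = y)))
    (hNotDiv : ∃ a : A, a ≠ 0 ∧ ¬ IsUnit a)
    (hinf : ¬ FiniteDimensional k A)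
    (V : Submodule k A) (hV : IsFrame k V)
    (hGK2 : algGK k V = 2)
    (M : Type v) [AddCommGroup M] [Module A M] [Module k M] [IsScalarTower k A M]
    [IsSimpleModule A M] (hMinf : ¬ FiniteDimensional k M) :
    modGK V M = 1 := by
  classical
  obtain ⟨hVfd, h1, htop⟩ := hV
  haveI := hVfd
  have hfg : V.FG := (Submodule.fg_iff_finiteDimensional V).mpr hVfd
  have hfdpow : ∀ p : ℕ, FiniteDimensional k ↥(V ^ p) := fun p =>
    (Submodule.fg_iff_finiteDimensional _).mp (hfg.pow p)
  haveI hMnt : Nontrivial M := IsSimpleModule.nontrivial A M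
  obtain ⟨m, hm⟩ := exists_ne (0 : M)
  have hspanm : ∀ z : M, z ≠ 0 → Submodule.span A ({z} : Set M) = ⊤ := by
    intro z hz
    rcases eq_bot_or_eq_top (Submodule.span A ({z} : Set M)) with h | h
    · exfalso
      apply hz
      have : z ∈ Submodule.span A ({z} : Set M) := Submodule.mem_span_singleton_self z
      rw [h] at this
      simpa using this
    · exact h
  have hann : ∃ a : A, a ≠ 0 ∧ a • m = 0 := by
    by_contra hcon
    push_neg at hcon
    obtain ⟨a₀, ha₀, hnu⟩ := hNotDiv
    have h1' : a₀ • m ≠ 0 := hcon a₀ ha₀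
    have hmem : m ∈ Submodule.span A ({a₀ • m} : Set M) :=
      (hspanm _ h1').symm ▸ Submodule.mem_top
    obtain ⟨b, hb⟩ := Submodule.mem_span_singleton.mp hmem
    have hzero : (b * a₀ - 1) • m = 0 := by
      rw [sub_smul, one_smul, mul_smul, hb, sub_self]
    have hba : b * a₀ = 1 := by
      by_contra hne
      exact hcon _ (sub_ne_zero.mpr hne) hzero
    have hab : a₀ * b = 1 := by
      have h2 : (a₀ * b - 1) * a₀ = 0 := by
        rw [sub_mul, one_mul, mul_assoc, hba, mul_one, sub_self]
      rcases mul_eq_zero.mp h2 with h | h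
      · rwa [sub_eq_zero] at h
      · exact absurd h ha₀
    exact hnu ⟨⟨a₀, b, hab, hba⟩, rfl⟩
  obtain ⟨a, ha, ham⟩ := hann
  obtain ⟨r, har⟩ := exists_mem_pow h1 htop a
  -- the map x ↦ x • m
  set φ : A →ₗ[k] M := smulMap (k := k) (M := M) m with hφ
  have hTq : ∀ q : ℕ, Submodule.map φ (V ^ q)
      = spanSMul (V ^ q) (Submodule.span k ({m} : Set M)) := by
    intro q
    rw [hφ, ← span_smul_singleton_eq]
    have heq : spanSMul (V ^ q) (Submodule.span k ({m} : Set M))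
        = Submodule.span k (((V ^ q : Submodule k A) : Set A) • ({m} : Set M)) := by
      conv_lhs => rw [← Submodule.span_eq (V ^ q)]
      rw [spanSMul_span_eq]
    rw [heq]
  have hfdT : ∀ q : ℕ, FiniteDimensional k ↥(Submodule.map φ (V ^ q)) := by
    intro q
    rw [hTq q]
    haveI := hfdpow q
    haveI : FiniteDimensional k ↥(Submodule.span k ({m} : Set M)) :=
      (Submodule.fg_iff_finiteDimensional _).mp (Submodule.fg_span_singleton m)
    exact spanSMul_finiteDimensional
  -- positivity of the algebra growth function
  have hgpos : ∀ p : ℕ, 1 ≤ Module.finrank k ↥(V ^ p) := by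
    intro p
    haveI := hfdpow p
    haveI : Nontrivial ↥(V ^ p) := by
      refine Submodule.nontrivial_iff_ne_bot.mpr fun hbot => ?_
      have : (1 : A) ∈ V ^ p := one_mem_pow h1 p
      rw [hbot] at this
      exact one_ne_zero ((Submodule.mem_bot k).mp this)
    exact Module.finrank_pos
  -- THE KEY CLAIM: every admissible F computes GK dimension 1
  have key : ∀ F : Submodule k M, FiniteDimensional k ↥F →
      Submodule.span A (F : Set M) = ⊤ → modGKWith V F = 1 := by
    intro F hFfd hFtop
    haveI := hFfd
    have hMod : modGKWith V F
        = gammaGrowth (fun n => ((Module.finrank k ↥(spanSMul (V ^ n) F)) : ℝ)) := rfl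
    have hfdW : ∀ n : ℕ, FiniteDimensional k ↥(spanSMul (V ^ n) F) := fun n => by
      haveI := hfdpow n
      exact spanSMul_finiteDimensional
    have hlower : ∀ n : ℕ, n + 1 ≤ Module.finrank k ↥(spanSMul (V ^ n) F) := fun n =>
      finrank_spanSMul_lower V h1 htop F hFtop hMnt hMinf n
    -- lower bound
    have hlow : (1 : EReal) ≤ modGKWith V F := by
      rw [hMod]
      apply one_le_gammaGrowth
      filter_upwards [eventually_ge_atTop 0] with n _
      have := hlower n
      exact_mod_cast Nat.le_of_succ_le this
    -- the subspace F sits inside `V^c • m` for some c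
    have hFle : ∃ c : ℕ, F ≤ Submodule.map φ (V ^ c) := by
      obtain ⟨t, ht⟩ := (Submodule.fg_iff_finiteDimensional F).mpr hFfd
      have hex : ∀ f ∈ t, ∃ c : ℕ, f ∈ Submodule.map φ (V ^ c) := by
        intro f _
        have hmem : f ∈ Submodule.span A ({m} : Set M) := (hspanm m hm).symm ▸ Submodule.mem_top
        obtain ⟨b, hb⟩ := Submodule.mem_span_singleton.mp hmem
        obtain ⟨c, hc⟩ := exists_mem_pow h1 htop b
        exact ⟨c, ⟨b, hc, hb⟩⟩
      choose! g hg using hex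
      refine ⟨t.sup g, ?_⟩
      rw [← ht, Submodule.span_le]
      intro f hf
      have hf' : f ∈ t := hf
      exact Submodule.map_mono (pow_le_pow_of_le h1 (Finset.le_sup hf')) (hg f hf')
    obtain ⟨c, hFc⟩ := hFle
    have hWT : ∀ n : ℕ, spanSMul (V ^ n) F ≤ Submodule.map φ (V ^ (n + c)) := by
      intro n
      have h2 : spanSMul (V ^ n) F ≤ spanSMul (V ^ n) (Submodule.map φ (V ^ c)) :=
        spanSMul_mono le_rfl hFc
      rw [hTq c, ← spanSMul_mul, ← pow_add] at h2
      rw [hTq (n + c)]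
      exact h2
    -- upper bound
    have hup : modGKWith V F ≤ (1 : EReal) := by
      rw [hMod]
      apply gammaGrowth_le_one
      intro ε hε
      set δ : ℝ := ε / 2 with hδdef
      have hδ0 : 0 < δ := by positivity
      have hGK2' : gammaGrowth (fun p => ((Module.finrank k ↥(V ^ p)) : ℝ)) = 2 := hGK2
      have hev := extract_growth hGK2' δ hδ0
      obtain ⟨q₀, hq₀⟩ := eventually_atTop.mp hev
      set K : ℝ := (1 + δ) * Real.log 2 + (2 + δ) * Real.log ((r : ℝ) + 1) with hKdef
      have htend : Tendsto (fun n : ℕ => (ε - δ) * Real.log n) atTop atTop := by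
        apply Tendsto.const_mul_atTop (by linarith : (0 : ℝ) < ε - δ)
        exact Real.tendsto_log_atTop.comp tendsto_natCast_atTop_atTop
      filter_upwards [eventually_ge_atTop (max q₀ (max c 2)), htend.eventually_ge_atTop K]
        with n hn hK
      have hnq₀ : q₀ ≤ n := le_trans (le_max_left _ _) hn
      have hnc : c ≤ n := le_trans (le_trans (le_max_left _ _) (le_max_right _ _)) hn
      have hn2 : 2 ≤ n := le_trans (le_trans (le_max_right _ _) (le_max_right _ _)) hn
      set q : ℕ := n + c with hqdef
      set N : ℕ := (r + 1) * q with hNdef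
      have hqN : q ≤ N := Nat.le_mul_of_pos_left q (Nat.succ_pos r)
      have hnq : n ≤ q := Nat.le_add_right n c
      -- natural-number inequalities
      haveI := hfdT q
      haveI := hfdpow N
      have hfd : Module.finrank k ↥(spanSMul (V ^ n) F)
          ≤ Module.finrank k ↥(Submodule.map φ (V ^ q)) :=
        Submodule.finrank_mono (hWT n)
      have hcount : q * Module.finrank k ↥(Submodule.map φ (V ^ q))
          ≤ Module.finrank k ↥(V ^ N) := by
        have := count_lemma m V h1 a ha r har ham q
        rwa [span_smul_singleton_eq] at this
      have hgN := hq₀ N (le_trans hnq₀ (le_trans hnq hqN))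
      -- pass to real logarithms
      set fn : ℝ := ((Module.finrank k ↥(spanSMul (V ^ n) F)) : ℝ) with hfn
      set d : ℝ := ((Module.finrank k ↥(Submodule.map φ (V ^ q))) : ℝ) with hd
      set G : ℝ := ((Module.finrank k ↥(V ^ N)) : ℝ) with hG
      have hfn1 : (1 : ℝ) ≤ fn := by
        have := hlower n
        rw [hfn]
        exact_mod_cast le_trans (Nat.le_add_left 1 n) this
      have hd1 : fn ≤ d := by rw [hfn, hd]; exact_mod_cast hfd
      have hd1' : (1 : ℝ) ≤ d := le_trans hfn1 hd1
      have hA1 : Real.log fn ≤ Real.log d := Real.log_le_log (by linarith) hd1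
      have hqpos : (0 : ℝ) < (q : ℝ) := by
        have : (2 : ℕ) ≤ q := le_trans hn2 hnq
        exact_mod_cast lt_of_lt_of_le (by norm_num) this
      have hA2 : Real.log (q : ℝ) + Real.log d ≤ Real.log G := by
        rw [← Real.log_mul (by linarith) (by linarith)]
        apply Real.log_le_log (by positivity)
        rw [hd, hG]
        exact_mod_cast hcount
      have hA3 : Real.log G ≤ (2 + δ) * Real.log (N : ℝ) := hgN
      have hA4 : Real.log (N : ℝ) = Real.log ((r : ℝ) + 1) + Real.log (q : ℝ) := by
        have hcast : (N : ℝ) = ((r : ℝ) + 1) * (q : ℝ) := by rw [hNdef]; push_cast; ring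
        rw [hcast, Real.log_mul (by positivity) (by linarith)]
      have hnpos : (0 : ℝ) < (n : ℝ) := by exact_mod_cast lt_of_lt_of_le (by norm_num) hn2
      have hA5 : Real.log (q : ℝ) ≤ Real.log 2 + Real.log (n : ℝ) := by
        rw [← Real.log_mul (by norm_num) (by linarith)]
        apply Real.log_le_log hqpos
        have : q ≤ 2 * n := by omega
        calc (q : ℝ) ≤ ((2 * n : ℕ) : ℝ) := by exact_mod_cast this
          _ = 2 * (n : ℝ) := by push_cast; ring
      have hlog2 : (0 : ℝ) ≤ Real.log 2 := Real.log_nonneg (by norm_num)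
      have hlogr : (0 : ℝ) ≤ Real.log ((r : ℝ) + 1) := by
        apply Real.log_nonneg
        have : (0 : ℝ) ≤ (r : ℝ) := Nat.cast_nonneg r
        linarith
      have hB1 : (2 + δ) * Real.log (N : ℝ)
          = (2 + δ) * Real.log ((r : ℝ) + 1) + (2 + δ) * Real.log (q : ℝ) := by
        rw [hA4]; ring
      have hB2 : (1 + δ) * Real.log (q : ℝ)
          ≤ (1 + δ) * (Real.log 2 + Real.log (n : ℝ)) :=
        mul_le_mul_of_nonneg_left hA5 (by linarith)
      -- combine everything
      have hC1 : Real.log d ≤ (2 + δ) * Real.log ((r : ℝ) + 1) + (1 + δ) * Real.log (q : ℝ) := by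
        linarith
      have hC2 : Real.log fn
          ≤ (1 + δ) * (Real.log 2 + Real.log (n : ℝ)) + (2 + δ) * Real.log ((r : ℝ) + 1) := by
        linarith
      have hKle : (1 + δ) * Real.log 2 + (2 + δ) * Real.log ((r : ℝ) + 1)
          ≤ (ε - δ) * Real.log (n : ℝ) := by rw [← hKdef]; exact hK
      linarith
    exact le_antisymm hup hlow
  -- conclude
  have hset : {d : EReal | ∃ F : Submodule k M, FiniteDimensional k ↥F ∧
      Submodule.span A (F : Set M) = ⊤ ∧ d = modGKWith V F} = {1} := by
    ext d
    simp only [Set.mem_setOf_eq, Set.mem_singleton_iff]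
    constructor
    · rintro ⟨F, hF1, hF2, rfl⟩
      exact key F hF1 hF2
    · rintro rfl
      refine ⟨Submodule.span k ({m} : Set M), ?_, ?_, ?_⟩
      · exact (Submodule.fg_iff_finiteDimensional _).mp (Submodule.fg_span_singleton m)
      · apply le_antisymm le_top
        rw [← hspanm m hm]
        exact Submodule.span_mono Submodule.subset_span
      · refine (key _ ?_ ?_).symm
        · exact (Submodule.fg_iff_finiteDimensional _).mp (Submodule.fg_span_singleton m)
        · apply le_antisymm le_top
          rw [← hspanm m hm]
          exact Submodule.span_mono Submodule.subset_span
  rw [modGK, hset, csInf_singleton]
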